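/- arXiv:1301.7620 — 3 statements merged into one kernel-verified Lean document; each statement's English description precedes it below -/
import Mathlib

section
/- Let r ∈ (0,1], and let ψ: ℕ → (0,∞) be nonincreasing and such that there exists ε > 0 for which the sequence k^{r+ε}·ψ(k) is almost decreasing (i.e., there is a constant K₁ > 0 with k₁^{r+ε}ψ(k₁) ≤ K₁·k₂^{r+ε}ψ(k₂) for all k₁ > k₂ ≥ 1). Then there exists a constant K > 0, depending only on ψ and r, such that for every n ∈ ℕ: ψ(n)·n^r ≤ Σ_{k=n}^∞ Δψ(k)·k^r ≤ K·ψ(n)·n^r, where Δψ(k) = ψ(k) − ψ(k+1). -/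
open Real

open Finset Filter Topology

/-!
Summation by parts gives `∑_{k ≥ n} Δψ(k) k^r = ψ(n) n^r + ∑_{k ≥ n} ψ(k+1) ((k+1)^r - k^r)`.
By concavity `(k+1)^r - k^r ≤ r k^(r-1)`, and almost-decrease gives
`ψ(k) k^(r-1) ≤ C n^(r+ε) ψ(n) k^(-1-ε)`; the tail `∑_{k ≥ n} k^(-1-ε)` telescopes against
`k^(-ε)` and is `O(n^(-ε) / ε)`. The lower bound is `k^r ≥ n^r` together with
`∑_{k ≥ n} Δψ(k) = ψ(n)`, which holds because almost-decrease forces `ψ → 0`.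
-/

lemma rpow_add_one_sub_rpow_le {x p : ℝ} (hx : 0 < x) (hp0 : 0 ≤ p) (hp1 : p ≤ 1) :
    (x + 1) ^ p - x ^ p ≤ p * x ^ (p - 1) := by
  have hbern : (1 + x⁻¹) ^ p ≤ 1 + p * x⁻¹ :=
    rpow_one_add_le_one_add_mul_self (by linarith [inv_pos.2 hx]) hp0 hp1
  have hfactor : (x + 1) ^ p = x ^ p * (1 + x⁻¹) ^ p := by
    rw [← mul_rpow hx.le (by positivity), mul_add, mul_inv_cancel₀ hx.ne', mul_one]
  have hpow : x ^ (p - 1) = x ^ p * x⁻¹ := by rw [rpow_sub_one hx.ne', div_eq_mul_inv]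
  rw [hfactor, hpow]
  nlinarith [rpow_nonneg hx.le p]

lemma mul_rpow_add_one_le_rpow_sub_rpow {x ε : ℝ} (hx : 0 < x) (hε : 0 < ε) :
    ε * (x + 1) ^ (-1 - ε) ≤ x ^ (-ε) - (x + 1) ^ (-ε) := by
  have hx1 : 0 < x + 1 := by linarith
  -- convexity of `t ↦ t ^ (-ε)`, from `log` below and `exp` above their tangent lines
  have hlog : log x - log (x + 1) ≤ -(x + 1)⁻¹ := by
    rw [← log_div hx.ne' hx1.ne']
    have := log_le_sub_one_of_pos (div_pos hx hx1)
    field_simp at this ⊢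
    linarith
  have hexp : (x + 1) ^ (-ε) * (1 + ε * (x + 1)⁻¹) ≤ x ^ (-ε) := by
    have htangent := add_one_le_exp (log x * -ε - log (x + 1) * -ε)
    rw [rpow_def_of_pos hx, rpow_def_of_pos hx1]
    calc exp (log (x + 1) * -ε) * (1 + ε * (x + 1)⁻¹)
        ≤ exp (log (x + 1) * -ε) * exp (log x * -ε - log (x + 1) * -ε) := by
          gcongr
          nlinarith
      _ = exp (log x * -ε) := by rw [← exp_add]; ring_nf
  have hsplit : (x + 1) ^ (-1 - ε) = (x + 1) ^ (-ε) * (x + 1)⁻¹ := by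
    rw [sub_eq_neg_add, rpow_add hx1, rpow_neg_one, mul_comm]
  rw [hsplit]
  linarith

lemma sum_range_rpow_neg_one_sub_le {x ε : ℝ} (hx : 1 ≤ x) (hε : 0 < ε) (N : ℕ) :
    ∑ k ∈ range N, (x + k) ^ (-1 - ε) ≤ (1 + ε⁻¹) * x ^ (-ε) := by
  have hx0 : 0 < x := by linarith
  have htel : ∀ k : ℕ,
      (x + ↑(k + 1)) ^ (-1 - ε) ≤ ε⁻¹ * ((x + k) ^ (-ε) - (x + ↑(k + 1)) ^ (-ε)) := by
    intro k
    rw [Nat.cast_succ, ← add_assoc, le_inv_mul_iff₀ hε]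
    exact mul_rpow_add_one_le_rpow_sub_rpow (by positivity) hε
  have hfirst : x ^ (-1 - ε) ≤ x ^ (-ε) := rpow_le_rpow_of_exponent_le hx (by linarith)
  calc ∑ k ∈ range N, (x + k) ^ (-1 - ε) ≤ ∑ k ∈ range (N + 1), (x + k) ^ (-1 - ε) :=
        sum_le_sum_of_subset_of_nonneg (range_subset_range.2 N.le_succ)
          fun k _ _ => rpow_nonneg (by positivity) _
    _ = x ^ (-1 - ε) + ∑ k ∈ range N, (x + ↑(k + 1)) ^ (-1 - ε) := by
        rw [sum_range_succ', add_comm]; simp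
    _ ≤ x ^ (-ε) + ∑ k ∈ range N, ε⁻¹ * ((x + k) ^ (-ε) - (x + ↑(k + 1)) ^ (-ε)) := by
        gcongr with k; exact htel k
    _ = x ^ (-ε) + ε⁻¹ * (x ^ (-ε) - (x + N) ^ (-ε)) := by
        rw [← mul_sum, sum_range_sub' (fun k : ℕ => (x + k) ^ (-ε))]; simp
    _ ≤ (1 + ε⁻¹) * x ^ (-ε) := by
        have := rpow_nonneg (by positivity : 0 ≤ x + N) (-ε)
        have := inv_pos.2 hε
        nlinarith

lemma sum_range_sub_mul_eq {R : Type*} [CommRing R] (f g : ℕ → R) (N : ℕ) :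
    ∑ k ∈ range N, (f k - f (k + 1)) * g k
      = f 0 * g 0 - f N * g N + ∑ k ∈ range N, f (k + 1) * (g (k + 1) - g k) := by
  rw [← sum_range_sub' (fun k => f k * g k), ← sum_add_distrib]
  exact sum_congr rfl fun k _ => by ring

lemma le_tsum_sub_mul {φ g : ℕ → ℝ} (hφ : Antitone φ) (hlim : Tendsto φ atTop (𝓝 0))
    (hg : Monotone g) (hs : Summable fun k => (φ k - φ (k + 1)) * g k) :
    φ 0 * g 0 ≤ ∑' k, (φ k - φ (k + 1)) * g k := by
  have hpartial : ∀ N, (φ 0 - φ N) * g 0 ≤ ∑ k ∈ range N, (φ k - φ (k + 1)) * g k := by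
    intro N
    rw [← sum_range_sub', sum_mul]
    exact sum_le_sum fun k _ =>
      mul_le_mul_of_nonneg_left (hg k.zero_le) (sub_nonneg.2 (hφ k.le_succ))
  have hlim' : Tendsto (fun N => (φ 0 - φ N) * g 0) atTop (𝓝 (φ 0 * g 0)) := by
    simpa using (tendsto_const_nhds.sub hlim).mul_const (g 0)
  exact le_of_tendsto_of_tendsto' hlim' hs.hasSum.tendsto_sum_nat hpartial

lemma tendsto_zero_of_rpow_mul_le {φ : ℕ → ℝ} (hφ0 : ∀ k, 0 ≤ φ k) {x s B : ℝ} (hx : 0 ≤ x)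
    (hs : 0 < s) (hB : ∀ k : ℕ, (x + k) ^ s * φ k ≤ B) : Tendsto φ atTop (𝓝 0) := by
  have hmajor : Tendsto (fun k : ℕ => B * (x + k) ^ (-s)) atTop (𝓝 0) := by
    simpa using ((tendsto_rpow_neg_atTop hs).comp
      (tendsto_atTop_add_const_left _ x tendsto_natCast_atTop_atTop)).const_mul B
  refine tendsto_of_tendsto_of_tendsto_of_le_of_le' tendsto_const_nhds hmajor
    (Eventually.of_forall hφ0) ?_
  filter_upwards [eventually_gt_atTop 0] with k hk
  have hxk : 0 < (x + k) ^ s := rpow_pos_of_pos (by positivity) s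
  rw [rpow_neg (by positivity), ← div_eq_mul_inv, le_div_iff₀ hxk, mul_comm]
  exact hB k

section

variable {φ : ℕ → ℝ} {x r ε C : ℝ}

lemma sum_range_sub_mul_rpow_le (hφ : Antitone φ) (hφ0 : ∀ k, 0 ≤ φ k) (hx : 1 ≤ x)
    (hr0 : 0 ≤ r) (hr1 : r ≤ 1) (hε : 0 < ε) (hC : 0 ≤ C)
    (hdecay : ∀ k : ℕ, (x + k) ^ (r + ε) * φ k ≤ C * (x ^ (r + ε) * φ 0)) (N : ℕ) :
    ∑ k ∈ range N, (φ k - φ (k + 1)) * (x + k) ^ r ≤ (1 + r * C * (1 + ε⁻¹)) * (φ 0 * x ^ r) := by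
  have hx0 : 0 < x := by linarith
  set D := r * (C * (x ^ (r + ε) * φ 0))
  have hD : 0 ≤ D := by have := hφ0 0; positivity
  have hterm : ∀ k : ℕ,
      φ (k + 1) * ((x + ↑(k + 1)) ^ r - (x + k) ^ r) ≤ D * (x + k) ^ (-1 - ε) := by
    intro k
    have hxk : 0 < x + k := by positivity
    calc φ (k + 1) * ((x + ↑(k + 1)) ^ r - (x + k) ^ r)
        ≤ φ (k + 1) * (r * (x + k) ^ (r - 1)) := by
          rw [Nat.cast_succ, ← add_assoc]
          exact mul_le_mul_of_nonneg_left (rpow_add_one_sub_rpow_le hxk hr0 hr1) (hφ0 _)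
      _ ≤ r * ((x + k) ^ (r + ε) * φ k * (x + k) ^ (-1 - ε)) := by
          rw [mul_comm _ (φ k), mul_assoc, ← rpow_add hxk, show r + ε + (-1 - ε) = r - 1 by ring]
          linarith [mul_le_mul_of_nonneg_right (hφ k.le_succ)
            (mul_nonneg hr0 (rpow_nonneg hxk.le (r - 1)))]
      _ ≤ D * (x + k) ^ (-1 - ε) := by
          rw [← mul_assoc]
          exact mul_le_mul_of_nonneg_right (mul_le_mul_of_nonneg_left (hdecay k) hr0)
            (rpow_nonneg hxk.le _)
  have hsplit : x ^ (r + ε) * x ^ (-ε) = x ^ r := by rw [← rpow_add hx0]; ring_nf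
  calc ∑ k ∈ range N, (φ k - φ (k + 1)) * (x + k) ^ r
        ≤ φ 0 * x ^ r + ∑ k ∈ range N, D * (x + k) ^ (-1 - ε) := by
        rw [sum_range_sub_mul_eq φ (fun k : ℕ => (x + k) ^ r)]
        have := mul_nonneg (hφ0 N) (rpow_nonneg (by positivity : 0 ≤ x + N) r)
        simp only [Nat.cast_zero, add_zero]
        linarith [sum_le_sum fun k (_ : k ∈ range N) => hterm k]
    _ ≤ φ 0 * x ^ r + D * ((1 + ε⁻¹) * x ^ (-ε)) := by
        rw [← mul_sum]; gcongr; exact sum_range_rpow_neg_one_sub_le hx hε N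
    _ = (1 + r * C * (1 + ε⁻¹)) * (φ 0 * x ^ r) := by
        simp only [D]; rw [← hsplit]; ring

theorem tsum_sub_mul_rpow_bounds (hφ : Antitone φ) (hφ0 : ∀ k, 0 ≤ φ k) (hx : 1 ≤ x)
    (hr0 : 0 ≤ r) (hr1 : r ≤ 1) (hε : 0 < ε) (hC : 0 ≤ C)
    (hdecay : ∀ k : ℕ, (x + k) ^ (r + ε) * φ k ≤ C * (x ^ (r + ε) * φ 0)) :
    Summable (fun k : ℕ => (φ k - φ (k + 1)) * (x + k) ^ r) ∧
      φ 0 * x ^ r ≤ ∑' k : ℕ, (φ k - φ (k + 1)) * (x + k) ^ r ∧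
      ∑' k : ℕ, (φ k - φ (k + 1)) * (x + k) ^ r ≤ (1 + r * C * (1 + ε⁻¹)) * (φ 0 * x ^ r) := by
  have hnonneg : ∀ k : ℕ, 0 ≤ (φ k - φ (k + 1)) * (x + k) ^ r := fun k =>
    mul_nonneg (sub_nonneg.2 (hφ k.le_succ)) (rpow_nonneg (by linarith [k.cast_nonneg (α := ℝ)]) r)
  have hpartial := sum_range_sub_mul_rpow_le hφ hφ0 hx hr0 hr1 hε hC hdecay
  have hsum := summable_of_sum_range_le hnonneg hpartial
  have hmono : Monotone fun k : ℕ => (x + k) ^ r := fun i j hij =>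
    rpow_le_rpow (by linarith [i.cast_nonneg (α := ℝ)]) (by gcongr) hr0
  have hlim := tendsto_zero_of_rpow_mul_le hφ0 (by linarith) (by linarith) hdecay
  refine ⟨hsum, ?_, Real.tsum_le_of_sum_range_le hnonneg hpartial⟩
  simpa using le_tsum_sub_mul hφ hlim hmono hsum

end

theorem lemma1_sum_diff_bounds_general (r : ℝ) (hr0 : 0 < r) (hr1 : r ≤ 1)
    (ψ : ℕ → ℝ) (hpos : ∀ k : ℕ, 1 ≤ k → 0 < ψ k)
    (hmono : ∀ k : ℕ, 1 ≤ k → ψ (k + 1) ≤ ψ k)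
    (ε : ℝ) (hε : 0 < ε) (K₁ : ℝ)
    (halm : ∀ k₁ k₂ : ℕ, 1 ≤ k₂ → k₂ < k₁ →
      (k₁ : ℝ) ^ (r + ε) * ψ k₁ ≤ K₁ * ((k₂ : ℝ) ^ (r + ε) * ψ k₂)) :
    ∃ K : ℝ, 0 < K ∧ ∀ n : ℕ, 1 ≤ n →
      Summable (fun k : ℕ => (ψ (n + k) - ψ (n + k + 1)) * ((n + k : ℕ) : ℝ) ^ r) ∧
      ψ n * (n : ℝ) ^ r ≤ ∑' k : ℕ, (ψ (n + k) - ψ (n + k + 1)) * ((n + k : ℕ) : ℝ) ^ r ∧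
      ∑' k : ℕ, (ψ (n + k) - ψ (n + k + 1)) * ((n + k : ℕ) : ℝ) ^ r ≤ K * (ψ n * (n : ℝ) ^ r) := by
  refine ⟨1 + r * max K₁ 1 * (1 + ε⁻¹), by positivity, fun n hn => ?_⟩
  have hφ : Antitone fun k => ψ (n + k) :=
    antitone_nat_of_succ_le fun k => hmono (n + k) (by omega)
  have hφ0 : ∀ k, 0 ≤ ψ (n + k) := fun k => (hpos _ (by omega)).le
  -- `max K₁ 1` also covers the case `k₁ = k₂ = n`
  have hdecay : ∀ k : ℕ, ((n : ℝ) + k) ^ (r + ε) * ψ (n + k)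
      ≤ max K₁ 1 * ((n : ℝ) ^ (r + ε) * ψ (n + 0)) := by
    rintro (_ | k)
    · simpa using le_mul_of_one_le_left (by have := hφ0 0; positivity) (le_max_right K₁ 1)
    · have hn0 := hpos n hn
      exact_mod_cast (halm (n + (k + 1)) n hn (by omega)).trans
        (mul_le_mul_of_nonneg_right (le_max_left _ _) (by positivity))
  simp only [Nat.cast_add]
  exact tsum_sub_mul_rpow_bounds hφ hφ0 (x := n) (by exact_mod_cast hn) hr0.le hr1 hε
    (by positivity) hdecay

/-- Lemma 1: Let `r ∈ (0,1]` and let `ψ : ℕ → (0,∞)` be nonincreasing such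
that for some `ε > 0` the sequence `k^{r+ε}·ψ(k)` is almost decreasing.  Then there is a
constant `K > 0` (depending only on `ψ` and `r`) such that for every `n ≥ 1`
`ψ(n)·n^r ≤ Σ_{k=n}^∞ (ψ(k) − ψ(k+1))·k^r ≤ K·ψ(n)·n^r`. -/
theorem lemma1_sum_diff_bounds (r : ℝ) (hr0 : 0 < r) (hr1 : r ≤ 1)
    (ψ : ℕ → ℝ) (hpos : ∀ k : ℕ, 1 ≤ k → 0 < ψ k)
    (hmono : ∀ k : ℕ, 1 ≤ k → ψ (k + 1) ≤ ψ k)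
    (ε : ℝ) (hε : 0 < ε) (K₁ : ℝ) (hK₁ : 0 < K₁)
    (halm : ∀ k₁ k₂ : ℕ, 1 ≤ k₂ → k₂ < k₁ →
      (k₁ : ℝ) ^ (r + ε) * ψ k₁ ≤ K₁ * ((k₂ : ℝ) ^ (r + ε) * ψ k₂)) :
    ∃ K : ℝ, 0 < K ∧ ∀ n : ℕ, 1 ≤ n →
      Summable (fun k : ℕ => (ψ (n + k) - ψ (n + k + 1)) * ((n + k : ℕ) : ℝ) ^ r) ∧
      ψ n * (n : ℝ) ^ r ≤ ∑' k : ℕ, (ψ (n + k) - ψ (n + k + 1)) * ((n + k : ℕ) : ℝ) ^ r ∧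
      ∑' k : ℕ, (ψ (n + k) - ψ (n + k + 1)) * ((n + k : ℕ) : ℝ) ^ r ≤ K * (ψ n * (n : ℝ) ^ r) :=
  lemma1_sum_diff_bounds_general r hr0 hr1 ψ hpos hmono ε hε K₁ halm
end

section
/- Let r ∈ (0,1] and let ψ: ℕ → (0,∞) be nonincreasing with ψ(k) → 0 and Σ_{k=1}^∞ ψ(k)·k^{r−1} < ∞. Then for every n ∈ ℕ: Σ_{k=n}^∞ Δψ(k)·k^r ≤ r·Σ_{k=n}^∞ ψ(k)·k^{r−1} + ψ(n)·((n−1)^r + 1), where Δψ(k) = ψ(k) − ψ(k+1). -/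
open Real Finset

/-!
Abel summation: with `b k = ψ k · k ^ r`, the tangent-line bound for the concave map `x ↦ x ^ r`,
`(k + 1) ^ r ≤ k ^ r + r k ^ (r - 1)`, together with `0 ≤ ψ (k + 1) ≤ ψ k` gives
`Δψ(k) k ^ r + b (k + 1) ≤ b k + r ψ k k ^ (r - 1)`. Summing telescopes `b`, leaving
`b n = ψ n · n ^ r ≤ ψ n ((n - 1) ^ r + 1)` by subadditivity of `x ↦ x ^ r`.
-/

theorem Real.add_rpow_le_rpow_add_mul_rpow_sub_one {x y r : ℝ} (hx : 0 < x) (hy : -x ≤ y)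
    (hr0 : 0 ≤ r) (hr1 : r ≤ 1) : (x + y) ^ r ≤ x ^ r + r * x ^ (r - 1) * y := by
  have hyx : -1 ≤ y / x := by rwa [le_div_iff₀ hx, neg_one_mul]
  calc (x + y) ^ r = x ^ r * (1 + y / x) ^ r := by
        rw [← mul_rpow hx.le (by linarith), mul_add, mul_div_cancel₀ _ hx.ne', mul_one]
    _ ≤ x ^ r * (1 + r * (y / x)) := by
        gcongr
        exact rpow_one_add_le_one_add_mul_self hyx hr0 hr1
    _ = x ^ r + r * x ^ (r - 1) * y := by
        rw [rpow_sub_one hx.ne']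
        field_simp

theorem sub_mul_rpow_add_mul_rpow_add_one_le {p q x r : ℝ} (hq : 0 ≤ q) (hqp : q ≤ p)
    (hx : 0 < x) (hr0 : 0 ≤ r) (hr1 : r ≤ 1) :
    (p - q) * x ^ r + q * (x + 1) ^ r ≤ p * x ^ r + r * (p * x ^ (r - 1)) := by
  have htangent : (x + 1) ^ r ≤ x ^ r + r * x ^ (r - 1) := by
    simpa only [mul_one] using
      Real.add_rpow_le_rpow_add_mul_rpow_sub_one (y := 1) hx (by linarith) hr0 hr1
  have hslope : 0 ≤ r * x ^ (r - 1) := by positivity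
  nlinarith [mul_le_mul_of_nonneg_left htangent hq, mul_le_mul_of_nonneg_right hqp hslope]

section Telescoping

variable {a b c : ℕ → ℝ}

theorem sum_range_add_le_of_add_succ_le (h : ∀ k, a k + b (k + 1) ≤ b k + c k) (m : ℕ) :
    ∑ k ∈ range m, a k + b m ≤ b 0 + ∑ k ∈ range m, c k := by
  induction m with
  | zero => simp
  | succ m ih =>
    rw [sum_range_succ, sum_range_succ]
    linarith [h m]

theorem summable_and_tsum_le_of_add_succ_le (ha : ∀ k, 0 ≤ a k) (hb : ∀ k, 0 ≤ b k)
    (hc : ∀ k, 0 ≤ c k) (hcs : Summable c) (h : ∀ k, a k + b (k + 1) ≤ b k + c k) :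
    Summable a ∧ ∑' k, a k ≤ b 0 + ∑' k, c k := by
  have hpartial : ∀ m, ∑ k ∈ range m, a k ≤ b 0 + ∑' k, c k := fun m => by
    linarith [sum_range_add_le_of_add_succ_le h m, hb m,
      hcs.sum_le_tsum (range m) fun k _ => hc k]
  exact ⟨summable_of_sum_range_le ha hpartial, Real.tsum_le_of_sum_range_le ha hpartial⟩

end Telescoping

theorem abel_tail_estimate_general (r : ℝ) (hr0 : 0 < r) (hr1 : r ≤ 1)
    (ψ : ℕ → ℝ) (hpos : ∀ k : ℕ, 1 ≤ k → 0 < ψ k)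
    (hmono : ∀ k : ℕ, 1 ≤ k → ψ (k + 1) ≤ ψ k)
    (hsum : Summable (fun k : ℕ => ψ (k + 1) * ((k + 1 : ℕ) : ℝ) ^ (r - 1))) :
    ∀ n : ℕ, 1 ≤ n →
      Summable (fun k : ℕ => (ψ (n + k) - ψ (n + k + 1)) * ((n + k : ℕ) : ℝ) ^ r) ∧
      ∑' k : ℕ, (ψ (n + k) - ψ (n + k + 1)) * ((n + k : ℕ) : ℝ) ^ r ≤
        r * ∑' k : ℕ, ψ (n + k) * ((n + k : ℕ) : ℝ) ^ (r - 1) +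
          ψ n * (((n : ℝ) - 1) ^ r + 1) := by
  intro n hn
  have hψ : ∀ k, 0 < ψ (n + k) := fun k => hpos _ (by omega)
  have hΔψ : ∀ k, 0 ≤ ψ (n + k) - ψ (n + k + 1) := fun k => sub_nonneg.2 (hmono _ (by omega))
  have htail : Summable fun k => ψ (n + k) * ((n + k : ℕ) : ℝ) ^ (r - 1) := by
    refine ((summable_nat_add_iff (n - 1)).2 hsum).congr fun k => ?_
    rw [show k + (n - 1) + 1 = n + k by omega]
  obtain ⟨hsummable, hle⟩ := summable_and_tsum_le_of_add_succ_le
    (a := fun k => (ψ (n + k) - ψ (n + k + 1)) * ((n + k : ℕ) : ℝ) ^ r)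
    (b := fun k => ψ (n + k) * ((n + k : ℕ) : ℝ) ^ r)
    (c := fun k => r * (ψ (n + k) * ((n + k : ℕ) : ℝ) ^ (r - 1)))
    (fun k => mul_nonneg (hΔψ k) (by positivity)) (fun k => by have := hψ k; positivity)
    (fun k => by have := hψ k; positivity) (htail.mul_left r) fun k => by
      rw [← add_assoc, Nat.cast_add_one]
      exact sub_mul_rpow_add_mul_rpow_add_one_le (hψ (k + 1)).le (hmono _ (by omega))
        (by positivity) hr0.le hr1
  refine ⟨hsummable, hle.trans ?_⟩
  have hsubadd : (n : ℝ) ^ r ≤ ((n : ℝ) - 1) ^ r + 1 := by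
    simpa using Real.rpow_add_le_add_rpow (a := (n : ℝ) - 1) (b := 1)
      (by simp [Nat.one_le_cast.2 hn]) zero_le_one hr0.le hr1
  rw [tsum_mul_left]
  simp only [add_zero]
  linarith [mul_le_mul_of_nonneg_left hsubadd (hpos n hn).le]

/-- Let `r ∈ (0,1]` and let `ψ : ℕ → (0,∞)` be nonincreasing with `ψ(k) → 0`
and `Σ_{k=1}^∞ ψ(k)·k^{r−1} < ∞`.  Then for every `n ≥ 1`:
`Σ_{k=n}^∞ (ψ(k) − ψ(k+1))·k^r ≤ r·Σ_{k=n}^∞ ψ(k)·k^{r−1} + ψ(n)·((n−1)^r + 1)`. -/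
theorem abel_tail_estimate (r : ℝ) (hr0 : 0 < r) (hr1 : r ≤ 1)
    (ψ : ℕ → ℝ) (hpos : ∀ k : ℕ, 1 ≤ k → 0 < ψ k)
    (hmono : ∀ k : ℕ, 1 ≤ k → ψ (k + 1) ≤ ψ k)
    (hlim : Filter.Tendsto ψ Filter.atTop (nhds 0))
    (hsum : Summable (fun k : ℕ => ψ (k + 1) * ((k + 1 : ℕ) : ℝ) ^ (r - 1))) :
    ∀ n : ℕ, 1 ≤ n →
      Summable (fun k : ℕ => (ψ (n + k) - ψ (n + k + 1)) * ((n + k : ℕ) : ℝ) ^ r) ∧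
      ∑' k : ℕ, (ψ (n + k) - ψ (n + k + 1)) * ((n + k : ℕ) : ℝ) ^ r ≤
        r * ∑' k : ℕ, ψ (n + k) * ((n + k : ℕ) : ℝ) ^ (r - 1) +
          ψ n * (((n : ℝ) - 1) ^ r + 1) :=
  abel_tail_estimate_general r hr0 hr1 ψ hpos hmono hsum
end

section
/- Let 1 ≤ p < ∞ and 1/p + 1/p' = 1. There exists a constant K > 0, depending only on p, such that for every k ∈ ℕ and every β ∈ ℝ: ‖D_{k,β}‖_{p'} ≤ K·k^{1/p}, where for p' < ∞ the norm is ‖f‖_{p'} = (∫_{−π}^{π} |f(t)|^{p'} dt)^{1/p'} and for p' = ∞ (i.e., p = 1) it is the sup norm over [−π,π]. -/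
/-!
Telescoping `2 sin(t/2) cos(νt - c)` bounds `|sin(t/2)| · |Σ_{ν=1}^k cos(νt - c)|` by `1`, and
Jordan's inequality turns this into `|t| · |D_{k,β}(t)| ≤ 3π/2` on `[-π, π]`. Together with the
trivial bound `|D_{k,β}| ≤ k + 1/2` this gives `|D_{k,β}(t)| ≤ 7k (1 + k|t|)⁻¹`. The `L^{p'}` norm
of the right-hand side over all of `ℝ` is, by dilation, `7 k^{1 - 1/p'} = 7 k^{1/p}` times the
`L^{p'}` norm of `(1 + |x|)⁻¹`, which is finite because `p' > 1`.
-/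

open Real Finset MeasureTheory ENNReal

/-- The modified Dirichlet kernel `D_{k,β}(t) = (1/2)cos(βπ/2) + Σ_{ν=1}^{k} cos(νt − βπ/2)`. -/
noncomputable def dirichletBeta (k : ℕ) (β t : ℝ) : ℝ :=
  (1 / 2) * Real.cos (β * π / 2) + ∑ ν ∈ Finset.Icc 1 k, Real.cos ((ν : ℝ) * t - β * π / 2)

/-- The `L_q` norm (`q ∈ [1,∞]`, as an extended real exponent) of a function over one period
`(−π, π]`; for finite `q` this is `(∫_{−π}^{π} |f|^q)^{1/q}`, for `q = ∞` the essential
supremum of `|f|` over the period. -/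
noncomputable def qnorm (q : ℝ≥0∞) (f : ℝ → ℝ) : ℝ :=
  (eLpNorm f q (volume.restrict (Set.Ioc (-π) π))).toReal

theorem two_mul_sin_half_mul_sum_cos (k : ℕ) (c t : ℝ) :
    2 * sin (t / 2) * ∑ ν ∈ Icc 1 k, cos (ν * t - c) =
      sin ((k + 1 / 2) * t - c) - sin (t / 2 - c) := by
  induction k with
  | zero => simp [div_eq_inv_mul]
  | succ k ih =>
    have h : t / 2 - ((k + 1 : ℕ) * t - c) = -((k + 1 / 2) * t - c) := by push_cast; ring
    rw [sum_Icc_succ_top (by omega), mul_add, ih, two_mul_sin_mul_cos, h, sin_neg]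
    push_cast
    ring_nf

theorem abs_sin_half_mul_abs_sum_cos_le_one (k : ℕ) (c t : ℝ) :
    |sin (t / 2)| * |∑ ν ∈ Icc 1 k, cos (ν * t - c)| ≤ 1 := by
  have h := abs_sub (sin ((k + 1 / 2) * t - c)) (sin (t / 2 - c))
  rw [← two_mul_sin_half_mul_sum_cos, abs_mul, abs_mul, abs_two] at h
  linarith [abs_sin_le_one ((k + 1 / 2) * t - c), abs_sin_le_one (t / 2 - c)]

theorem abs_le_pi_mul_abs_sin_half {t : ℝ} (ht : |t| ≤ π) : |t| ≤ π * |sin (t / 2)| := by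
  have h := mul_abs_le_abs_sin (x := t / 2) (by rw [abs_div, abs_two]; linarith)
  rw [abs_div, abs_two] at h
  have := pi_pos
  calc |t| = π * (2 / π * (|t| / 2)) := by field_simp
    _ ≤ π * |sin (t / 2)| := by gcongr

theorem abs_mul_abs_sum_cos_le_pi (k : ℕ) (c : ℝ) {t : ℝ} (ht : |t| ≤ π) :
    |t| * |∑ ν ∈ Icc 1 k, cos (ν * t - c)| ≤ π :=
  calc |t| * |∑ ν ∈ Icc 1 k, cos (ν * t - c)|
      ≤ π * |sin (t / 2)| * |∑ ν ∈ Icc 1 k, cos (ν * t - c)| := by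
        gcongr; exact abs_le_pi_mul_abs_sin_half ht
    _ ≤ π := by
        rw [mul_assoc]
        exact mul_le_of_le_one_right pi_pos.le (abs_sin_half_mul_abs_sum_cos_le_one k c t)

theorem abs_sum_cos_le (k : ℕ) (c t : ℝ) : |∑ ν ∈ Icc 1 k, cos (ν * t - c)| ≤ k :=
  (abs_sum_le_sum_abs _ _).trans <| by
    simpa using sum_le_sum fun ν (_ : ν ∈ Icc 1 k) => abs_cos_le_one (ν * t - c)

theorem abs_dirichletBeta_le_add_abs_sum (k : ℕ) (β t : ℝ) :
    |dirichletBeta k β t| ≤ 1 / 2 + |∑ ν ∈ Icc 1 k, cos (ν * t - β * π / 2)| := by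
  refine (abs_add_le _ _).trans (add_le_add ?_ le_rfl)
  rw [abs_mul, abs_of_pos one_half_pos]
  exact mul_le_of_le_one_right one_half_pos.le (abs_cos_le_one _)

theorem abs_dirichletBeta_mul_one_add_le {k : ℕ} (hk : 1 ≤ k) (β : ℝ) {t : ℝ} (ht : |t| ≤ π) :
    |dirichletBeta k β t| * (1 + |k * t|) ≤ 7 * k := by
  have hk : (1 : ℝ) ≤ k := by exact_mod_cast hk
  have hD := abs_dirichletBeta_le_add_abs_sum k β t
  have hD_le : |dirichletBeta k β t| ≤ k + 1 / 2 := by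
    linarith [abs_sum_cos_le k (β * π / 2) t]
  have htD : |t| * |dirichletBeta k β t| ≤ 3 * π / 2 := by
    have := abs_mul_abs_sum_cos_le_pi k (β * π / 2) ht
    nlinarith [abs_nonneg t]
  rw [abs_mul, Nat.abs_cast]
  nlinarith [pi_lt_d2]

theorem abs_dirichletBeta_le_mul_inv {k : ℕ} (hk : 1 ≤ k) (β : ℝ) {t : ℝ}
    (ht : t ∈ Set.Icc (-π) π) : |dirichletBeta k β t| ≤ 7 * k * (1 + |k * t|)⁻¹ :=
  (le_mul_inv_iff₀ (by positivity)).2 (abs_dirichletBeta_mul_one_add_le hk β (abs_le.2 ht))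

theorem eLpNorm_comp_mul_left {E : Type*} [NormedAddCommGroup E] {f : ℝ → E}
    (hf : AEStronglyMeasurable f) {c : ℝ} (hc : c ≠ 0) (p : ℝ≥0∞) :
    eLpNorm (fun x => f (c * x)) p = ENNReal.ofReal |c⁻¹| ^ (1 / p).toReal * eLpNorm f p := by
  have hf' : AEStronglyMeasurable f (Measure.map (c * ·) volume) := by
    rw [Real.map_volume_mul_left hc]
    exact hf.smul_measure _
  rw [← Function.comp_def, ← eLpNorm_map_measure hf' (measurable_const_mul c).aemeasurable,
    Real.map_volume_mul_left hc, eLpNorm_smul_measure_of_ne_zero (by simpa using hc), smul_eq_mul]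

theorem eLpNorm_const_mul_comp_mul_left {f : ℝ → ℝ} (hf : AEStronglyMeasurable f) (a : ℝ)
    {c : ℝ} (hc : 0 < c) (p : ℝ≥0∞) :
    eLpNorm (fun x => a * f (c * x)) p =
      ENNReal.ofReal (|a| * c ^ (-(1 / p).toReal)) * eLpNorm f p := by
  have h : eLpNorm (fun x => a * f (c * x)) p = ‖a‖ₑ * eLpNorm (fun x => f (c * x)) p :=
    eLpNorm_const_smul a (fun x => f (c * x)) p volume
  rw [h, eLpNorm_comp_mul_left hf hc.ne', ENNReal.ofReal_mul (abs_nonneg a), Real.rpow_neg hc.le,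
    ← Real.inv_rpow hc.le, ← ENNReal.ofReal_rpow_of_pos (inv_pos.2 hc), abs_of_pos (inv_pos.2 hc),
    ← Real.norm_eq_abs a, ofReal_norm, mul_assoc]

theorem continuous_inv_one_add_abs : Continuous fun x : ℝ => (1 + |x|)⁻¹ :=
  Continuous.inv₀ (by fun_prop) fun x => by positivity

theorem memLp_inv_one_add_abs {q : ℝ≥0∞} (hq : 1 < q) :
    MemLp (fun x : ℝ => (1 + |x|)⁻¹) q := by
  have hmeas := continuous_inv_one_add_abs.aestronglyMeasurable (μ := volume)
  by_cases hq_top : q = ⊤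
  · subst hq_top
    refine memLp_top_of_bound hmeas 1 (ae_of_all _ fun x => ?_)
    rw [norm_inv, Real.norm_of_nonneg (by positivity)]
    exact inv_le_one_of_one_le₀ (le_add_of_nonneg_right (abs_nonneg x))
  have hq_one : 1 < q.toReal := by
    rwa [← ENNReal.toReal_one, ENNReal.toReal_lt_toReal one_ne_top hq_top]
  refine (integrable_norm_rpow_iff hmeas (zero_lt_one.trans hq).ne' hq_top).1 ?_
  refine (integrable_one_add_norm (E := ℝ) (μ := volume) (r := q.toReal) (by simpa)).congr
    (ae_of_all _ fun x => ?_)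
  have hx : 0 < 1 + |x| := by positivity
  simp only [norm_inv, Real.norm_eq_abs, abs_of_pos hx, Real.inv_rpow hx.le, Real.rpow_neg hx.le]

theorem eLpNorm_inv_one_add_abs_ne_zero {q : ℝ≥0∞} (hq : q ≠ 0) :
    eLpNorm (fun x : ℝ => (1 + |x|)⁻¹) q ≠ 0 := by
  rw [Ne, eLpNorm_eq_zero_iff continuous_inv_one_add_abs.aestronglyMeasurable hq]
  intro h
  obtain ⟨x, hx⟩ := h.exists
  exact (inv_pos.2 (by positivity : 0 < 1 + |x|)).ne' hx

theorem qnorm_le_of_abs_le {q : ℝ≥0∞} {f g : ℝ → ℝ} (hg : eLpNorm g q ≠ ⊤)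
    (hfg : ∀ t ∈ Set.Icc (-π) π, |f t| ≤ g t) : qnorm q f ≤ (eLpNorm g q).toReal :=
  ENNReal.toReal_mono hg <| (eLpNorm_mono_ae_real <| ae_restrict_of_forall_mem measurableSet_Ioc
    fun t ht => hfg t (Set.Ioc_subset_Icc_self ht)).trans
    (eLpNorm_mono_measure _ Measure.restrict_le_self)

theorem toReal_one_div_of_holderConjugate {p : ℝ} {q : ℝ≥0∞}
    [(ENNReal.ofReal p).HolderConjugate q] : (1 / q).toReal = 1 - 1 / p := by
  have hp : 0 < p := ENNReal.ofReal_pos.1 (HolderConjugate.pos _ q)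
  rw [one_div, one_div, ← HolderConjugate.one_sub_inv (ENNReal.ofReal p) q,
    ENNReal.toReal_sub_of_le (ENNReal.inv_le_one.2 (HolderConjugate.one_le _ q)) one_ne_top,
    ENNReal.toReal_inv, ENNReal.toReal_ofReal hp.le, ENNReal.toReal_one]

theorem dirichletBeta_norm_bound_general (p : ℝ) (p' : ℝ≥0∞)
    (hpp' : 1 / ENNReal.ofReal p + 1 / p' = 1) :
    ∃ K : ℝ, 0 < K ∧ ∀ k : ℕ, 1 ≤ k → ∀ β : ℝ,
      qnorm p' (fun t => dirichletBeta k β t) ≤ K * (k : ℝ) ^ (1 / p) := by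
  have : (ENNReal.ofReal p).HolderConjugate p' := by
    rw [ENNReal.holderConjugate_iff]; simpa only [one_div] using hpp'
  obtain ⟨M, hM_def⟩ : ∃ M, eLpNorm (fun x : ℝ => (1 + |x|)⁻¹) p' = M := ⟨_, rfl⟩
  have hM : M ≠ ⊤ := hM_def ▸ (memLp_inv_one_add_abs
    ((HolderConjugate.lt_top_iff_one_lt (ENNReal.ofReal p) p').1 ofReal_lt_top)).eLpNorm_ne_top
  have hM₀ : M ≠ 0 :=
    hM_def ▸ eLpNorm_inv_one_add_abs_ne_zero (HolderConjugate.ne_zero p' (ENNReal.ofReal p))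
  refine ⟨7 * M.toReal, mul_pos (by norm_num) (toReal_pos hM₀ hM), fun k hk β => ?_⟩
  have hk₀ : (0 : ℝ) < k := by exact_mod_cast hk
  have hscaled := eLpNorm_const_mul_comp_mul_left
    continuous_inv_one_add_abs.aestronglyMeasurable (7 * k) hk₀ p'
  rw [toReal_one_div_of_holderConjugate (p := p), hM_def] at hscaled
  calc qnorm p' (fun t => dirichletBeta k β t)
      ≤ (eLpNorm (fun t : ℝ => 7 * (k : ℝ) * (1 + |k * t|)⁻¹) p').toReal := by
        refine qnorm_le_of_abs_le ?_ fun t => abs_dirichletBeta_le_mul_inv hk β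
        rw [hscaled]
        finiteness
    _ = 7 * k * k ^ (-(1 - 1 / p)) * M.toReal := by
        rw [hscaled, toReal_mul, toReal_ofReal (by positivity), abs_of_pos (by positivity)]
    _ = 7 * M.toReal * k ^ (1 / p) := by
        rw [Real.rpow_neg hk₀.le, Real.rpow_sub hk₀, Real.rpow_one]
        field_simp

/-- Let `1 ≤ p < ∞` and `1/p + 1/p' = 1` (so `p' = ∞` when `p = 1`).  There is a
constant `K > 0` depending only on `p` such that for every `k ≥ 1` and every `β ∈ ℝ`:
`‖D_{k,β}‖_{p'} ≤ K·k^{1/p}`. -/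
theorem dirichletBeta_norm_bound (p : ℝ) (hp : 1 ≤ p) (p' : ℝ≥0∞)
    (hpp' : 1 / ENNReal.ofReal p + 1 / p' = 1) :
    ∃ K : ℝ, 0 < K ∧ ∀ k : ℕ, 1 ≤ k → ∀ β : ℝ,
      qnorm p' (fun t => dirichletBeta k β t) ≤ K * (k : ℝ) ^ (1 / p) :=
  dirichletBeta_norm_bound_general p p' hpp'
end
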